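/- arXiv:cs/0302004 — 7 statements merged into one kernel-verified Lean document; each statement's English description precedes it below -/
import Mathlib

section
/- Let L₁, L₂, C be languages over Σ with □ ∉ Σ, let π erase □, and let A = π⁻¹(L₁) \ (L₁·{□}) (set difference). Then π⁻¹(C) ∩ ((L₁·{□}·L₂) \ (A·L₂)) equals the set I = { w₁ □ w₂ | w₁w₂ ∈ C, w₁ ∈ L₁, w₂ ∈ L₂, and there exist no w₃ ≠ λ, w₄ with w₂ = w₃w₄, w₁w₃ ∈ L₁ and w₄ ∈ L₂ }. -/
/-- The extended alphabet `A ∪ {□}` is modeled as `Option A` (`none` is `□`).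
The erasing homomorphism `π` maps each letter of `A` to itself and `□` to the
empty word. -/
def eraseBox {A : Type} (w : List (Option A)) : List A := w.filterMap id

/-- Inverse image `π⁻¹(L)` of a language `L ⊆ A*` under the erasing
homomorphism. -/
def piInv {A : Type} (L : Set (List A)) : Set (List (Option A)) :=
  {w | eraseBox w ∈ L}

/-- The embedding of a language over `A` into the extended alphabet
`A ∪ {□}`. -/
def emb {A : Type} (L : Set (List A)) : Set (List (Option A)) :=
  {w | ∃ u ∈ L, w = u.map some}

/-- Concatenation of languages. -/
def conc {X : Type} (L K : Set (List X)) : Set (List X) :=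
  {w | ∃ u ∈ L, ∃ v ∈ K, w = u ++ v}

/-- The singleton language `{□}` over the extended alphabet. -/
def boxLang {A : Type} : Set (List (Option A)) := {[none]}

/-- The longest-match condition `c(p,s)`: no nonempty prefix of `s` can be
absorbed into the `L₁`-part. -/
def lmCond {A : Type} (L₁ L₂ : Set (List A)) (p s : List A) : Prop :=
  ¬ ∃ w₃ w₄, w₃ ≠ [] ∧ s = w₃ ++ w₄ ∧ p ++ w₃ ∈ L₁ ∧ w₄ ∈ L₂

/-- The set `I = { w₁ □ w₂ | w₁w₂ ∈ C, w₁ ∈ L₁, w₂ ∈ L₂, c(w₁,w₂) }`. -/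
def Iset {A : Type} (L₁ L₂ C : Set (List A)) : Set (List (Option A)) :=
  {w | ∃ p s, w = p.map some ++ none :: s.map some ∧
    p ++ s ∈ C ∧ p ∈ L₁ ∧ s ∈ L₂ ∧ lmCond L₁ L₂ p s}

lemma eraseBox_append {A : Type} (u v : List (Option A)) :
    eraseBox (u ++ v) = eraseBox u ++ eraseBox v := by
  simp [eraseBox]

lemma eraseBox_map_some {A : Type} (l : List A) : eraseBox (l.map some) = l := by
  simp [eraseBox, List.filterMap_map]

lemma eraseBox_cons_none {A : Type} (l : List (Option A)) :
    eraseBox (none :: l) = eraseBox l := by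
  simp [eraseBox]

lemma key_split {A : Type} : ∀ (p : List A) (x u : List (Option A)) (v : List A),
    p.map some ++ none :: x = u ++ v.map some →
    ∃ t, u = p.map some ++ none :: t ∧ x = t ++ v.map some := by
  intro p
  induction p with
  | nil =>
    intro x u v h
    cases u with
    | nil =>
      exfalso
      have : (none : Option A) ∈ v.map some := by
        simp only [List.nil_append] at h; rw [← h]; simp
      simp at this
    | cons o u' =>
      simp only [List.map_nil, List.nil_append, List.cons_append, List.cons.injEq] at h ⊢
      exact ⟨u', ⟨h.1.symm, rfl⟩, h.2⟩
  | cons a p' ih =>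
    intro x u v h
    cases u with
    | nil =>
      exfalso
      have : (none : Option A) ∈ v.map some := by
        simp only [List.nil_append] at h; rw [← h]; simp
      simp at this
    | cons o u' =>
      simp only [List.map_cons, List.cons_append, List.cons.injEq] at h
      obtain ⟨t, ht1, ht2⟩ := ih x u' v h.2
      exact ⟨t, by simp [← h.1, ht1], ht2⟩

lemma map_eq_append {A : Type} : ∀ (s : List A) (t : List (Option A)) (v : List A),
    s.map some = t ++ v.map some → ∃ w, s = w ++ v ∧ t = w.map some := by
  intro s
  induction s with
  | nil =>
    intro t v h
    have h1 : t = [] ∧ v.map some = [] := by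
      constructor
      · cases t with
        | nil => rfl
        | cons o t' => simp at h
      · cases t with
        | nil => simpa using h.symm
        | cons o t' => simp at h
    refine ⟨[], ?_, by simp [h1.1]⟩
    have := h1.2
    cases v with
    | nil => rfl
    | cons b v' => simp at this
  | cons a s' ih =>
    intro t v h
    cases t with
    | nil =>
      refine ⟨[], ?_, rfl⟩
      have hv : a :: s' = v := by
        apply List.map_injective_iff.mpr (Option.some_injective A)
        simpa using h
      simp [hv]
    | cons o t' =>
      simp only [List.map_cons, List.cons_append, List.cons.injEq] at h
      obtain ⟨w, hw1, hw2⟩ := ih t' v h.2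
      exact ⟨a :: w, by simp [hw1], by simp [← h.1, hw2]⟩

lemma split_unique {A : Type} : ∀ (p : List A) (q : List A) (x y : List (Option A)),
    p.map some ++ none :: x = q.map some ++ none :: y → p = q ∧ x = y := by
  intro p
  induction p with
  | nil =>
    intro q x y h
    cases q with
    | nil => simpa using h
    | cons b q' => simp at h
  | cons a p' ih =>
    intro q x y h
    cases q with
    | nil => simp at h
    | cons b q' =>
      simp only [List.map_cons, List.cons_append, List.cons.injEq] at h ⊢
      obtain ⟨h1, h2⟩ := h
      obtain ⟨h3, h4⟩ := ih q' x y h2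
      exact ⟨⟨by simpa using h1, h3⟩, h4⟩

/-- Key characterization: membership of `p□s` in `A·L₂`. -/
lemma mem_A_conc {A : Type} (L₁ L₂ : Set (List A)) (p s : List A) :
    (p.map some ++ none :: s.map some ∈
      conc (piInv L₁ \ conc (emb L₁) boxLang) (emb L₂)) ↔
    ∃ w₃ w₄, w₃ ≠ [] ∧ s = w₃ ++ w₄ ∧ p ++ w₃ ∈ L₁ ∧ w₄ ∈ L₂ := by
  constructor
  · rintro ⟨u, ⟨hu1, hu2⟩, v', ⟨v, hv, rfl⟩, heq⟩
    obtain ⟨t, htu, hts⟩ := key_split p (s.map some) u v heq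
    obtain ⟨w₃, hw3, rfl⟩ := map_eq_append s t v hts
    have herase : eraseBox u = p ++ w₃ := by
      rw [htu]
      simp [eraseBox_append, eraseBox_map_some, eraseBox_cons_none]
    have hL : p ++ w₃ ∈ L₁ := by rw [← herase]; exact hu1
    have hne : w₃ ≠ [] := by
      rintro rfl
      apply hu2
      refine ⟨p.map some, ⟨p, by simpa using hL, rfl⟩, [none], rfl, ?_⟩
      simp [htu]
    exact ⟨w₃, v, hne, hw3, hL, hv⟩
  · rintro ⟨w₃, w₄, hne, rfl, h13, h4⟩
    refine ⟨p.map some ++ none :: w₃.map some, ⟨?_, ?_⟩,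
      w₄.map some, ⟨w₄, h4, rfl⟩, by simp⟩
    · show eraseBox _ ∈ L₁
      simpa [eraseBox_append, eraseBox_map_some, eraseBox_cons_none] using h13
    · rintro ⟨a, ⟨q, hq, rfl⟩, b, hb, h⟩
      have hb' : b = [none] := hb
      subst hb'
      have : p.map some ++ none :: w₃.map some = q.map some ++ none :: [] := by
        simpa using h
      obtain ⟨-, h2⟩ := split_unique p q _ _ this
      exact hne (by simpa using h2)

/-- With `A = π⁻¹(L₁) \ (L₁·{□})`, we have
`π⁻¹(C) ∩ ((L₁·{□}·L₂) \ (A·L₂)) = I`. -/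
theorem Iset_eq {A : Type} (L₁ L₂ C : Set (List A)) :
    piInv C ∩
      (conc (conc (emb L₁) boxLang) (emb L₂) \
        conc (piInv L₁ \ conc (emb L₁) boxLang) (emb L₂)) =
    Iset L₁ L₂ C := by
  ext w
  constructor
  · rintro ⟨hC, hmem, hnot⟩
    obtain ⟨u, ⟨a, ⟨p, hp, rfl⟩, b, hb, rfl⟩, v, ⟨s, hs, rfl⟩, rfl⟩ := hmem
    have hb' : b = [none] := hb
    subst hb'
    have hw : (p.map some ++ [none]) ++ s.map some
        = p.map some ++ none :: s.map some := by simp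
    refine ⟨p, s, hw, ?_, hp, hs, ?_⟩
    · have : eraseBox ((p.map some ++ [none]) ++ s.map some) = p ++ s := by
        simp [eraseBox_append, eraseBox_map_some, eraseBox, List.filterMap_cons]
      rw [← this]; exact hC
    · intro hex
      apply hnot
      rw [hw]
      exact (mem_A_conc L₁ L₂ p s).mpr hex
  · rintro ⟨p, s, rfl, hC, hp, hs, hlm⟩
    refine ⟨?_, ⟨?_, ?_⟩⟩
    · show eraseBox _ ∈ C
      simpa [eraseBox_append, eraseBox_map_some, eraseBox_cons_none] using hC
    · exact ⟨p.map some ++ [none], ⟨p.map some, ⟨p, hp, rfl⟩, [none], rfl, rfl⟩,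
        s.map some, ⟨s, hs, rfl⟩, by simp⟩
    · intro h
      exact hlm ((mem_A_conc L₁ L₂ p s).mp h)
end

section
/- With notation as before, the right quotient I / ({□}·L₂) equals T₁ = { p ∈ L₁ | ∃ s ∈ L₂, ps ∈ C and the longest-match condition c(p,s) holds }, where c(p,s) means there exist no w₃ ≠ λ, w₄ with s = w₃w₄, p w₃ ∈ L₁ and w₄ ∈ L₂. -/
lemma split_unique_s5 {A : Type} : ∀ (a b c d : List (Option A)), none ∉ a → none ∉ c →
    a ++ none :: b = c ++ none :: d → a = c ∧ b = d := by
  intro a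
  induction a with
  | nil =>
    intro b c d _ hc h
    cases c with
    | nil => simpa using h
    | cons y c' =>
      simp only [List.nil_append, List.cons_append, List.cons.injEq] at h
      obtain ⟨hy, _⟩ := h
      subst hy
      simp at hc
  | cons x a' ih =>
    intro b c d ha hc h
    cases c with
    | nil =>
      simp only [List.cons_append, List.nil_append, List.cons.injEq] at h
      obtain ⟨hx, _⟩ := h
      subst hx
      simp at ha
    | cons y c' =>
      simp only [List.cons_append, List.cons.injEq] at h
      obtain ⟨hxy, h'⟩ := h
      have := ih b c' d (fun hm => ha (List.mem_cons_of_mem _ hm))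
        (fun hm => hc (List.mem_cons_of_mem _ hm)) h'
      exact ⟨by rw [hxy, this.1], this.2⟩

/-- The right quotient `I / ({□}·L₂)` equals (the embedding into
the extended alphabet of) the set
`T₁ = { p ∈ L₁ | ∃ s ∈ L₂, ps ∈ C ∧ c(p,s) }`. -/
theorem rightQuotient_Iset_eq_T1 {A : Type} (L₁ L₂ C : Set (List A)) :
    {u : List (Option A) | ∃ v ∈ conc boxLang (emb L₂), u ++ v ∈ Iset L₁ L₂ C} =
    {u : List (Option A) | ∃ p : List A, u = p.map some ∧ p ∈ L₁ ∧
      ∃ s ∈ L₂, p ++ s ∈ C ∧ lmCond L₁ L₂ p s} := by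
  classical
  ext u
  constructor
  · rintro ⟨v, ⟨b, hb, w, ⟨s₂, hs₂, rfl⟩, rfl⟩, hin⟩
    have hb' : b = [none] := hb
    subst hb'
    obtain ⟨p, s, heq, hC, hp, hs, hlm⟩ := hin
    have heq' : u ++ none :: s₂.map some = p.map some ++ none :: s.map some := by
      simpa using heq
    have hnc : (none : Option A) ∉ p.map some := by simp
    have hna : (none : Option A) ∉ u := by
      intro hm
      have hcount : List.count (none : Option A) (u ++ none :: s₂.map some) =
          List.count none (p.map some ++ none :: s.map some) := by rw [heq']
      simp [List.count_append, List.count_cons, List.count_eq_zero_of_not_mem hnc,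
        List.count_eq_zero_of_not_mem (show (none : Option A) ∉ s₂.map some by simp),
        List.count_eq_zero_of_not_mem (show (none : Option A) ∉ s.map some by simp)] at hcount
      have : List.count (none : Option A) u = 0 := by omega
      exact (List.count_pos_iff.mpr hm).ne' (by omega)
    obtain ⟨h1, h2⟩ := split_unique_s5 u (s₂.map some) (p.map some) (s.map some) hna hnc heq'
    have hss : s₂ = s := by
      have := List.map_injective_iff.mpr (fun a b h => Option.some_injective A h) h2
      exact this
    subst hss
    exact ⟨p, h1, hp, s₂, hs, hC, hlm⟩
  · rintro ⟨p, rfl, hp, s, hs, hC, hlm⟩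
    refine ⟨none :: s.map some, ⟨[none], rfl, s.map some, ⟨s, hs, rfl⟩, rfl⟩,
      p, s, by simp, hC, hp, hs, hlm⟩
end

section
/- With notation as before, the left quotient (L₁·{□}) \ I equals C₂ = { s ∈ L₂ | ∃ p ∈ L₁, ps ∈ C and the longest-match condition c(p,s) holds }. -/
lemma aux_split {A : Type} : ∀ (p q : List A) (x y : List (Option A)),
    p.map some ++ none :: x = q.map some ++ none :: y → p = q ∧ x = y := by
  intro p
  induction p with
  | nil =>
    intro q x y h
    cases q with
    | nil => simpa using h
    | cons b q => simp at h
  | cons a p ih =>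
    intro q x y h
    cases q with
    | nil => simp at h
    | cons b q =>
      simp only [List.map_cons, List.cons_append, List.cons.injEq, Option.some.injEq] at h
      obtain ⟨rfl, h2⟩ := h
      obtain ⟨rfl, rfl⟩ := ih q x y h2
      exact ⟨rfl, rfl⟩

/-- The left quotient `(L₁·{□}) \ I` equals (the embedding into
the extended alphabet of) the set
`C₂ = { s ∈ L₂ | ∃ p ∈ L₁, ps ∈ C ∧ c(p,s) }`. -/
theorem leftQuotient_Iset_eq_C2 {A : Type} (L₁ L₂ C : Set (List A)) :
    {v : List (Option A) | ∃ u ∈ conc (emb L₁) boxLang, u ++ v ∈ Iset L₁ L₂ C} =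
    {v : List (Option A) | ∃ s : List A, v = s.map some ∧ s ∈ L₂ ∧
      ∃ p ∈ L₁, p ++ s ∈ C ∧ lmCond L₁ L₂ p s} := by
  ext v
  constructor
  · rintro ⟨u, ⟨pm, ⟨p, hp, rfl⟩, b, hb, rfl⟩, hI⟩
    have hb' : b = [none] := hb
    subst hb'
    obtain ⟨p', s, heq, hC, hp', hs, hlm⟩ := hI
    have h2 : p.map some ++ none :: v = p'.map some ++ none :: s.map some := by
      simpa using heq
    obtain ⟨rfl, rfl⟩ := aux_split p p' v (s.map some) h2
    exact ⟨s, rfl, hs, p, hp', hC, hlm⟩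
  · rintro ⟨s, rfl, hs, p, hp, hC, hlm⟩
    refine ⟨p.map some ++ [none], ⟨p.map some, ⟨p, hp, rfl⟩, [none], rfl, rfl⟩, p, s, by simp, hC, hp, hs, hlm⟩
end

section
/- If L₁, L₂, C are regular languages over Σ, then the set I = { p □ s | ps ∈ C, p ∈ L₁, s ∈ L₂, and no nonempty prefix of s can be absorbed: ¬∃ w₃ ≠ λ, w₄ with s = w₃w₄, p w₃ ∈ L₁, w₄ ∈ L₂ } is a regular language over Σ ∪ {□}. -/
/-!
Following the paper, `I = π⁻¹(C) ∩ (L₁□L₂ − (π⁻¹(L₁) − L₁□)L₂)`: a word `p□s` of `L₁□L₂` lies in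
the subtracted language exactly when it splits as `(p□w₃)w₄` with `pw₃ ∈ L₁`, `w₄ ∈ L₂` and
`w₃ ≠ []`, the last condition coming from removing `L₁□` (here `p ∈ L₁` matters). The closure properties this needs (concatenation, letter-to-letter images, inverse
homomorphic images, finite languages) are proved through the Myhill–Nerode theorem: in each case
every left quotient of the new language is determined by finitely many data built from left
quotients of the old ones.
-/

namespace Language

variable {α β : Type*} {L K : Language α}

theorem IsRegular.of_leftQuotient_mem {𝒬 : Set (Language α)} (h𝒬 : 𝒬.Finite)
    (hL : ∀ x, L.leftQuotient x ∈ 𝒬) : L.IsRegular :=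
  .of_finite_range_leftQuotient (h𝒬.subset (Set.range_subset_iff.2 hL))

protected theorem IsRegular.sub (hL : L.IsRegular) (hK : K.IsRegular) : (L - K).IsRegular :=
  hL.inf hK.compl

theorem mem_leftQuotient_mul {x y : List α} :
    y ∈ (L * K).leftQuotient x ↔
      y ∈ L.leftQuotient x * K ∨ ∃ v, (∃ u ∈ L, u ++ v = x) ∧ y ∈ K.leftQuotient v := by
  constructor
  · rintro ⟨a, ha, b, hb, hab⟩
    rcases List.append_eq_append_iff.1 hab.symm with ⟨a', rfl, rfl⟩ | ⟨v, rfl, rfl⟩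
    · exact .inl ⟨a', ha, b, hb, rfl⟩
    · exact .inr ⟨v, ⟨a, ha, rfl⟩, hb⟩
  · rintro (⟨a, ha, b, hb, rfl⟩ | ⟨v, ⟨u, hu, rfl⟩, hv⟩)
    · exact ⟨x ++ a, ha, b, hb, by simp⟩
    · exact ⟨u, hu, v ++ y, hv, by simp⟩

/-- The left quotient of `L * K` by `x` is determined by the left quotient of `L` by `x` and the
set of left quotients of `K` by the suffixes of `x` that remain after a prefix in `L`. -/
protected theorem IsRegular.mul (hL : L.IsRegular) (hK : K.IsRegular) : (L * K).IsRegular := by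
  let F : Language α × Set (Language α) → Language α := fun Q =>
    {y | y ∈ Q.1 * K ∨ ∃ P ∈ Q.2, y ∈ P}
  refine .of_leftQuotient_mem ((hL.finite_range_leftQuotient.prod
    hK.finite_range_leftQuotient.finite_subsets).image F) fun x =>
      ⟨(L.leftQuotient x, K.leftQuotient '' {v | ∃ u ∈ L, u ++ v = x}),
        ⟨⟨x, rfl⟩, Set.image_subset_range _ _⟩, ?_⟩
  ext y
  show _ ∨ _ ↔ _
  rw [mem_leftQuotient_mul, Set.exists_mem_image]
  rfl

theorem mem_leftQuotient_map {f : α → β} {x y : List β} :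
    y ∈ (map f L).leftQuotient x ↔ ∃ u, u.map f = x ∧ y ∈ map f (L.leftQuotient u) := by
  constructor
  · rintro ⟨w, hw, hwxy⟩
    obtain ⟨u, v, rfl, rfl, rfl⟩ := List.map_eq_append_iff.1 hwxy
    exact ⟨u, rfl, v, hw, rfl⟩
  · rintro ⟨u, rfl, v, hv, rfl⟩
    exact ⟨u ++ v, hv, List.map_append⟩

protected theorem IsRegular.map (f : α → β) (hL : L.IsRegular) : (map f L).IsRegular :=
  .of_leftQuotient_mem (hL.finite_range_leftQuotient.finite_subsets.image
    (fun 𝒮 => {y | ∃ P ∈ 𝒮, y ∈ map f P} : Set (Language α) → Language β)) fun x =>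
      ⟨L.leftQuotient '' {u | u.map f = x}, Set.image_subset_range _ _,
        Language.ext fun _ => Set.exists_mem_image.trans mem_leftQuotient_map.symm⟩

protected theorem IsRegular.preimage_flatMap (f : β → List α) (hL : L.IsRegular) :
    IsRegular ({w | w.flatMap f ∈ L} : Set (List β)) :=
  .of_leftQuotient_mem (hL.finite_range_leftQuotient.image fun Q => {w | w.flatMap f ∈ Q})
    fun x => ⟨L.leftQuotient (x.flatMap f), ⟨_, rfl⟩, by
      ext y
      show _ ↔ (x ++ y).flatMap f ∈ L
      rw [List.flatMap_append]; rfl⟩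

/-- Every left quotient of a finite language consists of suffixes of its words. -/
theorem IsRegular.of_finite (hL : (L : Set (List α)).Finite) : L.IsRegular := by
  refine .of_leftQuotient_mem (hL.biUnion fun w _ => w.tails.finite_toSet).finite_subsets
    fun x y hy => Set.mem_biUnion hy ?_
  exact (List.mem_tails _ _).2 (List.suffix_append x y)

end Language

open Language

variable {A : Type}

theorem conc_eq_mul {X : Type} (L K : Language X) : conc L K = L * K :=
  Set.ext fun _ => ⟨fun ⟨u, hu, v, hv, h⟩ => ⟨u, hu, v, hv, h.symm⟩,
    fun ⟨u, hu, v, hv, h⟩ => ⟨u, hu, v, hv, h.symm⟩⟩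

theorem isRegular_conc {X : Type} {L K : Language X} (hL : L.IsRegular) (hK : K.IsRegular) :
    IsRegular (conc L K) :=
  conc_eq_mul L K ▸ hL.mul hK

theorem isRegular_piInv {L : Language A} (hL : L.IsRegular) :
    IsRegular (piInv L : Language (Option A)) := by
  have : piInv L = {w | w.flatMap Option.toList ∈ L} := by
    simp only [piInv, eraseBox, List.filterMap_eq_flatMap_toList, id]
    rfl
  rw [this]
  exact hL.preimage_flatMap _

theorem isRegular_emb {L : Language A} (hL : L.IsRegular) :
    IsRegular (emb L : Language (Option A)) := by
  have : emb L = map some L := by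
    ext w
    exact exists_congr fun u => and_congr_right fun _ => eq_comm
  rw [this]
  exact hL.map _

theorem isRegular_boxLang : IsRegular (boxLang : Language (Option A)) :=
  .of_finite (Set.finite_singleton _)

def boxed (p s : List A) : List (Option A) := p.map some ++ none :: s.map some

theorem eraseBox_boxed (p s : List A) : eraseBox (boxed p s) = p ++ s := by
  simp [eraseBox, boxed, List.filterMap_map]

theorem boxed_inj {p s p' s' : List A} : boxed p s = boxed p' s' ↔ p = p' ∧ s = s' := by
  have hmap := List.map_injective_iff.2 (Option.some_injective A)
  refine ⟨fun h => ?_, by rintro ⟨rfl, rfl⟩; rfl⟩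
  induction p generalizing p' with
  | nil => cases p' <;> simp_all [boxed, hmap.eq_iff]
  | cons a p ih => cases p' <;> simp_all [boxed, hmap.eq_iff]

theorem boxed_eq_append_map_some_iff {p s v : List A} {x : List (Option A)} :
    boxed p s = x ++ v.map some ↔ ∃ w, s = w ++ v ∧ x = boxed p w := by
  refine ⟨fun h => ?_, by rintro ⟨w, rfl, rfl⟩; simp [boxed]⟩
  rcases List.append_eq_append_iff.1 h with ⟨c, rfl, hc⟩ | ⟨c, -, hv⟩
  · rcases List.cons_eq_append_iff.1 hc with ⟨-, hv⟩ | ⟨c, rfl, hs⟩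
    · simp [List.map_eq_cons_iff] at hv
    · obtain ⟨w, v', rfl, rfl, hv'⟩ := List.map_eq_append_iff.1 hs
      exact ⟨w, by rw [List.map_injective_iff.2 (Option.some_injective A) hv'], rfl⟩
  · have : none ∈ v.map some := by simp [hv]
    simp at this

theorem boxed_mem_piInv {L : Set (List A)} {p s : List A} :
    boxed p s ∈ piInv L ↔ p ++ s ∈ L := by
  rw [piInv, Set.mem_ofPred_eq, eraseBox_boxed]

theorem mem_conc_emb_boxLang {L : Set (List A)} {x : List (Option A)} :
    x ∈ conc (emb L) boxLang ↔ ∃ p ∈ L, x = boxed p [] := by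
  constructor
  · rintro ⟨_, ⟨p, hp, rfl⟩, _, rfl, rfl⟩
    exact ⟨p, hp, rfl⟩
  · rintro ⟨p, hp, rfl⟩
    exact ⟨_, ⟨p, hp, rfl⟩, _, rfl, rfl⟩

theorem mem_conc_conc_emb_boxLang_emb {L₁ L₂ : Set (List A)} {x : List (Option A)} :
    x ∈ conc (conc (emb L₁) boxLang) (emb L₂) ↔ ∃ p ∈ L₁, ∃ s ∈ L₂, x = boxed p s := by
  constructor
  · rintro ⟨_, hu, _, ⟨s, hs, rfl⟩, rfl⟩
    obtain ⟨p, hp, rfl⟩ := mem_conc_emb_boxLang.1 hu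
    exact ⟨p, hp, s, hs, by simp [boxed]⟩
  · rintro ⟨p, hp, s, hs, rfl⟩
    exact ⟨_, mem_conc_emb_boxLang.2 ⟨p, hp, rfl⟩, _, ⟨s, hs, rfl⟩, by simp [boxed]⟩

theorem boxed_notMem_iff_lmCond {L₁ L₂ : Set (List A)} {p s : List A} (hp : p ∈ L₁) :
    boxed p s ∉ conc (piInv L₁ \ conc (emb L₁) boxLang) (emb L₂) ↔ lmCond L₁ L₂ p s := by
  rw [lmCond, not_iff_not]
  constructor
  · rintro ⟨x, ⟨hx, hxbox⟩, _, ⟨v, hv, rfl⟩, hxv⟩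
    obtain ⟨w, rfl, rfl⟩ := boxed_eq_append_map_some_iff.1 hxv
    refine ⟨w, v, fun hw => hxbox ?_, rfl, boxed_mem_piInv.1 hx, hv⟩
    exact mem_conc_emb_boxLang.2 ⟨p, hp, hw ▸ rfl⟩
  · rintro ⟨w, v, hw, rfl, hpw, hv⟩
    refine ⟨boxed p w, ⟨boxed_mem_piInv.2 hpw, fun hbox => hw ?_⟩, _, ⟨v, hv, rfl⟩,
      boxed_eq_append_map_some_iff.2 ⟨w, rfl, rfl⟩⟩
    obtain ⟨p', -, h⟩ := mem_conc_emb_boxLang.1 hbox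
    exact (boxed_inj.1 h).2

theorem Iset_eq_inter_diff (L₁ L₂ C : Set (List A)) :
    Iset L₁ L₂ C = piInv C ∩ (conc (conc (emb L₁) boxLang) (emb L₂) \
      conc (piInv L₁ \ conc (emb L₁) boxLang) (emb L₂)) := by
  ext w
  rw [Set.mem_inter_iff, Set.mem_sdiff, mem_conc_conc_emb_boxLang_emb]
  constructor
  · rintro ⟨p, s, rfl, hC, hp, hs, hlm⟩
    exact ⟨boxed_mem_piInv.2 hC, ⟨p, hp, s, hs, rfl⟩, (boxed_notMem_iff_lmCond hp).2 hlm⟩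
  · rintro ⟨hC, ⟨p, hp, s, hs, rfl⟩, hlm⟩
    exact ⟨p, s, rfl, boxed_mem_piInv.1 hC, hp, hs, (boxed_notMem_iff_lmCond hp).1 hlm⟩

theorem Iset_isRegular_general {A : Type} (L₁ L₂ C : Language A)
    (h₁ : L₁.IsRegular) (h₂ : L₂.IsRegular) (hC : C.IsRegular) :
    Language.IsRegular (Iset (L₁ : Set (List A)) L₂ C : Language (Option A)) := by
  have hbox₁ := isRegular_conc (isRegular_emb h₁) isRegular_boxLang
  rw [Iset_eq_inter_diff L₁ L₂ C]
  exact (isRegular_piInv hC).inf <| (isRegular_conc hbox₁ (isRegular_emb h₂)).sub <|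
    isRegular_conc ((isRegular_piInv h₁).sub hbox₁) (isRegular_emb h₂)

/-- If `L₁`, `L₂`, `C` are regular languages over `A`, then
`I = { p □ s | ps ∈ C, p ∈ L₁, s ∈ L₂, c(p,s) }` is a regular language over
the extended alphabet `A ∪ {□}`. -/
theorem Iset_isRegular {A : Type} [Fintype A] (L₁ L₂ C : Language A)
    (h₁ : L₁.IsRegular) (h₂ : L₂.IsRegular) (hC : C.IsRegular) :
    Language.IsRegular (Iset (L₁ : Set (List A)) L₂ C : Language (Option A)) :=
  Iset_isRegular_general L₁ L₂ C h₁ h₂ hC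
end

section
/- If L₁, L₂, C are regular, then T₁ = { p ∈ L₁ | ∃ s ∈ L₂, ps ∈ C and no nonempty w₃, w₄ exist with s = w₃w₄, p w₃ ∈ L₁, w₄ ∈ L₂ } is regular. -/
/-!
By Myhill–Nerode it suffices to see that `T₁` has finitely many left quotients. Reading a prefix
`x` turns the longest-match set built from `L₁, L₂, C` into the one built from the quotients
`x⁻¹L₁, L₂, x⁻¹C`, so the quotients of `T₁` are determined by the finitely many pairs of
quotients of `L₁` and `C`.
-/

namespace Language

theorem IsRegular.of_leftQuotient_eq {α : Type*} {L K₁ K₂ : Language α} (h₁ : K₁.IsRegular)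
    (h₂ : K₂.IsRegular) (f : Language α → Language α → Language α)
    (hf : ∀ x, L.leftQuotient x = f (K₁.leftQuotient x) (K₂.leftQuotient x)) :
    L.IsRegular := by
  rw [isRegular_iff_finite_range_leftQuotient]
  refine (h₁.finite_range_leftQuotient.image2 f h₂.finite_range_leftQuotient).subset ?_
  rintro _ ⟨x, rfl⟩
  exact hf x ▸ Set.mem_image2_of_mem (Set.mem_range_self x) (Set.mem_range_self x)

variable {α : Type}

theorem lmCond_leftQuotient_iff (L₁ L₂ : Language α) (x p s : List α) :
    lmCond (L₁.leftQuotient x : Set (List α)) L₂ p s ↔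
      lmCond (L₁ : Set (List α)) L₂ (x ++ p) s := by
  simp only [lmCond, List.append_assoc]
  rfl

def longestMatchPrefixes (L₁ L₂ C : Language α) : Language α :=
  {p | p ∈ L₁ ∧ ∃ s ∈ L₂, p ++ s ∈ C ∧ lmCond (L₁ : Set (List α)) L₂ p s}

theorem leftQuotient_longestMatchPrefixes (L₁ L₂ C : Language α) (x : List α) :
    (longestMatchPrefixes L₁ L₂ C).leftQuotient x =
      longestMatchPrefixes (L₁.leftQuotient x) L₂ (C.leftQuotient x) := by
  ext p
  change x ++ p ∈ L₁ ∧ (∃ s ∈ L₂, x ++ p ++ s ∈ C ∧ _) ↔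
    x ++ p ∈ L₁ ∧ ∃ s ∈ L₂, x ++ (p ++ s) ∈ C ∧ _
  simp only [lmCond_leftQuotient_iff, List.append_assoc]

end Language

theorem T1_isRegular_general {A : Type} (L₁ L₂ C : Language A)
    (h₁ : L₁.IsRegular) (hC : C.IsRegular) :
    Language.IsRegular {p : List A | p ∈ L₁ ∧
      ∃ s ∈ L₂, p ++ s ∈ C ∧ lmCond (L₁ : Set (List A)) L₂ p s} :=
  Language.IsRegular.of_leftQuotient_eq h₁ hC (fun K₁ K₂ ↦ K₁.longestMatchPrefixes L₂ K₂)
    (Language.leftQuotient_longestMatchPrefixes L₁ L₂ C)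

/-- If `L₁`, `L₂`, `C` are regular, then
`T₁ = { p ∈ L₁ | ∃ s ∈ L₂, ps ∈ C ∧ c(p,s) }` is regular. -/
theorem T1_isRegular {A : Type} [Fintype A] (L₁ L₂ C : Language A)
    (h₁ : L₁.IsRegular) (h₂ : L₂.IsRegular) (hC : C.IsRegular) :
    Language.IsRegular {p : List A | p ∈ L₁ ∧
      ∃ s ∈ L₂, p ++ s ∈ C ∧ lmCond (L₁ : Set (List A)) L₂ p s} :=
  T1_isRegular_general L₁ L₂ C h₁ hC
end

section
/- If L₁, L₂, C are regular, then C₂ = { s ∈ L₂ | ∃ p ∈ L₁, ps ∈ C and no nonempty w₃, w₄ exist with s = w₃w₄, p w₃ ∈ L₁, w₄ ∈ L₂ } is regular. -/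
/-!
By Myhill–Nerode, a language is regular iff it has finitely many left quotients `p⁻¹L`.
The longest-match condition `c(p, s)` says `s ∉ (p⁻¹L₁ \ {ε}) L₂`, so
`C₂ = L₂ ∩ ⋃_{p ∈ L₁} (p⁻¹C \ (p⁻¹L₁ \ {ε}) L₂)`. Each member of this union depends only on the
pair `(p⁻¹L₁, p⁻¹C)`, so the union is finite, and each member is regular because regular
languages are closed under quotients, Boolean operations and concatenation. Closure under
concatenation is again Myhill–Nerode: `x⁻¹(KM) = (x⁻¹K) M ∪ ⋃_{uv = x, u ∈ K} v⁻¹M`.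
-/

namespace Language

variable {α : Type*} {l m : Language α}

theorem isRegular_bot : (⊥ : Language α).IsRegular :=
  .of_finite_range_leftQuotient <| (Set.finite_singleton ⊥).subset <|
    Set.range_subset_iff.2 fun _ => rfl

theorem leftQuotient_one_cons (a : α) (x : List α) :
    (1 : Language α).leftQuotient (a :: x) = 0 := by
  ext y
  simp

theorem isRegular_one : (1 : Language α).IsRegular := by
  refine .of_finite_range_leftQuotient <| (Set.toFinite {1, 0}).subset ?_
  rintro _ ⟨_ | ⟨a, x⟩, rfl⟩
  · exact .inl rfl
  · exact .inr (leftQuotient_one_cons a x)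

theorem IsRegular.sub_s9 (hl : l.IsRegular) (hm : m.IsRegular) : (l - m).IsRegular :=
  hl.inf hm.compl

theorem isRegular_sSup {S : Set (Language α)} (hS : S.Finite) (h : ∀ l ∈ S, l.IsRegular) :
    (sSup S).IsRegular := by
  induction S, hS using Set.Finite.induction_on with
  | empty => simpa using isRegular_bot
  | @insert l S _ _ ih =>
    rw [sSup_insert]
    exact (h l (.inl rfl)).add (ih fun l' hl' => h l' (.inr hl'))

theorem isRegular_biSup_of_finite_range {ι : Type*} {f : ι → Language α}
    (hf : (Set.range f).Finite) (hreg : ∀ i, (f i).IsRegular) (s : Set ι) :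
    (⨆ i ∈ s, f i).IsRegular := by
  rw [← sSup_image]
  exact isRegular_sSup (hf.subset (Set.image_subset_range f s))
    (Set.forall_mem_image.2 fun i _ => hreg i)

theorem IsRegular.leftQuotient (hl : l.IsRegular) (x : List α) : (l.leftQuotient x).IsRegular :=
  .of_finite_range_leftQuotient <| hl.finite_range_leftQuotient.subset <|
    Set.range_subset_iff.2 fun y => ⟨x ++ y, leftQuotient_append l x y⟩

theorem leftQuotient_mul (l m : Language α) (x : List α) :
    (l * m).leftQuotient x =
      l.leftQuotient x * m + sSup (m.leftQuotient '' {v | ∃ u ∈ l, u ++ v = x}) := by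
  ext y
  simp only [mem_mul, mem_add, sSup_image, mem_iSup, Set.mem_ofPred_eq, mem_leftQuotient,
    List.append_eq_append_iff, exists_prop]
  constructor
  · rintro ⟨u, hu, w, hw, ⟨v, rfl, rfl⟩ | ⟨u', rfl, rfl⟩⟩
    · exact .inr ⟨v, ⟨u, hu, rfl⟩, hw⟩
    · exact .inl ⟨u', hu, w, hw, rfl⟩
  · rintro (⟨u', hu', w, hw, rfl⟩ | ⟨v, ⟨u, hu, rfl⟩, hv⟩)
    · exact ⟨_, hu', w, hw, .inr ⟨u', rfl, rfl⟩⟩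
    · exact ⟨u, hu, _, hv, .inl ⟨v, rfl, rfl⟩⟩

theorem IsRegular.mul_s9 (hl : l.IsRegular) (hm : m.IsRegular) : (l * m).IsRegular := by
  rw [isRegular_iff_finite_range_leftQuotient] at *
  refine ((hl.prod hm.finite_subsets).image fun q => q.1 * m + sSup q.2).subset ?_
  rintro _ ⟨x, rfl⟩
  exact ⟨(l.leftQuotient x, m.leftQuotient '' {v | ∃ u ∈ l, u ++ v = x}),
    ⟨⟨x, rfl⟩, Set.image_subset_range _ _⟩, (leftQuotient_mul l m x).symm⟩

end Language

open Language

theorem lmCond_iff_notMem_mul {A : Type} (L₁ L₂ : Language A) (p s : List A) :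
    lmCond L₁ L₂ p s ↔ s ∉ (L₁.leftQuotient p - 1) * L₂ := by
  simp only [lmCond, mem_mul, mem_sub, mem_one, mem_leftQuotient]
  refine not_congr ⟨?_, ?_⟩
  · rintro ⟨w₃, w₄, hw₃, rfl, hpw₃, hw₄⟩
    exact ⟨w₃, ⟨hpw₃, hw₃⟩, w₄, hw₄, rfl⟩
  · rintro ⟨w₃, ⟨hpw₃, hw₃⟩, w₄, hw₄, rfl⟩
    exact ⟨w₃, w₄, hw₃, rfl, hpw₃, hw₄⟩

theorem C2_isRegular_general {A : Type} (L₁ L₂ C : Language A)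
    (h₁ : L₁.IsRegular) (h₂ : L₂.IsRegular) (hC : C.IsRegular) :
    Language.IsRegular {s : List A | s ∈ L₂ ∧
      ∃ p ∈ L₁, p ++ s ∈ C ∧ lmCond (L₁ : Set (List A)) L₂ p s} := by
  set M : Language A × Language A → Language A := fun K => K.2 - (K.1 - 1) * L₂
  have hM : ∀ p, (M (L₁.leftQuotient p, C.leftQuotient p)).IsRegular := fun p =>
    (hC.leftQuotient p).sub_s9 (((h₁.leftQuotient p).sub_s9 isRegular_one).mul_s9 h₂)
  have hfin : (Set.range fun p => M (L₁.leftQuotient p, C.leftQuotient p)).Finite := by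
    refine ((h₁.finite_range_leftQuotient.prod hC.finite_range_leftQuotient).image M).subset ?_
    rintro _ ⟨p, rfl⟩
    exact ⟨_, ⟨⟨p, rfl⟩, ⟨p, rfl⟩⟩, rfl⟩
  have mem_iff : ∀ s, s ∈ L₂ ⊓ ⨆ p ∈ (L₁ : Set (List A)), M (L₁.leftQuotient p, C.leftQuotient p) ↔
      s ∈ L₂ ∧ ∃ p ∈ L₁, p ++ s ∈ C ∧ lmCond (L₁ : Set (List A)) L₂ p s := fun s => by
    simp [M, mem_iSup, mem_sub, lmCond_iff_notMem_mul, and_left_comm]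
  exact Language.ext mem_iff ▸ h₂.inf (isRegular_biSup_of_finite_range hfin hM _)

/-- If `L₁`, `L₂`, `C` are regular, then
`C₂ = { s ∈ L₂ | ∃ p ∈ L₁, ps ∈ C ∧ c(p,s) }` is regular. -/
theorem C2_isRegular {A : Type} [Fintype A] (L₁ L₂ C : Language A)
    (h₁ : L₁.IsRegular) (h₂ : L₂.IsRegular) (hC : C.IsRegular) :
    Language.IsRegular {s : List A | s ∈ L₂ ∧
      ∃ p ∈ L₁, p ++ s ∈ C ∧ lmCond (L₁ : Set (List A)) L₂ p s} :=
  C2_isRegular_general L₁ L₂ C h₁ h₂ hC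
end

section
/- For any languages K (with K = L₁* star-closed) and L₂, each word w ∈ K·L₂ admits at most one 'longest-match' split (p, s) with w = ps, p ∈ K, s ∈ L₂, and ¬∃ w₃ ≠ λ, w₄ : s = w₃w₄ ∧ p w₃ ∈ K ∧ w₄ ∈ L₂. -/
/-- A longest-match split of `w` w.r.t. languages `K` and `L₂`: a factorization
`w = p ++ s` with `p ∈ K`, `s ∈ L₂`, such that no nonempty prefix `w₃` of `s`
can be absorbed into the `K`-part. -/
def LMSplit {A : Type} (K L₂ : Set (List A)) (w p s : List A) : Prop :=
  w = p ++ s ∧ p ∈ K ∧ s ∈ L₂ ∧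
    ¬ ∃ w₃ w₄, w₃ ≠ [] ∧ s = w₃ ++ w₄ ∧ p ++ w₃ ∈ K ∧ w₄ ∈ L₂

private theorem lm_aux {A : Type} (K L₂ : Set (List A)) (w p s p' s' : List A)
    (h : LMSplit K L₂ w p s) (h' : LMSplit K L₂ w p' s')
    (hpre : p <+: p') : p = p' := by
  obtain ⟨w₃, hw₃⟩ := hpre
  by_cases hw : w₃ = []
  · simp [hw] at hw₃; simp [hw₃]
  · exfalso
    obtain ⟨he, hpK, hsL, hneg⟩ := h
    obtain ⟨he', hpK', hsL', _⟩ := h'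
    have hs : s = w₃ ++ s' := by
      apply List.append_cancel_left (as := p)
      rw [← he, he', ← hw₃, List.append_assoc]
    exact hneg ⟨w₃, s', hw, hs, by rw [hw₃]; exact hpK', hsL'⟩

/-- If `K = L₁∗` is a Kleene star (star-closed), then every word
admits at most one longest-match split with respect to `K` and `L₂`. -/
theorem lmSplit_unique {A : Type} (L₁ L₂ : Language A) (K : Set (List A))
    (hK : K = KStar.kstar L₁) (w p s p' s' : List A)
    (h : LMSplit K (L₂ : Set (List A)) w p s)
    (h' : LMSplit K (L₂ : Set (List A)) w p' s') :
    p = p' ∧ s = s' := by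
  have hpre : p <+: p' ∨ p' <+: p := by
    have h1 : p <+: w := h.1 ▸ ⟨s, rfl⟩
    have h2 : p' <+: w := h'.1 ▸ ⟨s', rfl⟩
    exact List.prefix_or_prefix_of_prefix h1 h2
  have hp : p = p' := by
    rcases hpre with hp | hp
    · exact lm_aux K L₂ w p s p' s' h h' hp
    · exact (lm_aux K L₂ w p' s' p s h' h hp).symm
  refine ⟨hp, ?_⟩
  apply List.append_cancel_left (as := p)
  rw [← h.1, hp, ← h'.1]
end
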